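/- Top-Level Substitutions Distribute with Overlap: in the direct-style λ*ε-calculus, suppose x : T^q ∈ Γ, θ = [p/x], p and q consist only of store locations in dom(Σ), p ∩ φ ⊆ q, r ⊆ φ, r' ⊆ φ, and r and r' are saturated (r = r* and r' = r'* with respect to Γ and Σ). Then qualifier substitution distributes over intersection: (r ∩ r')θ = rθ ∩ r'θ. -/
import Mathlib


/-- Atoms: term variables and store locations. -/
inductive Atom : Type
  | var : ℕ → Atom
  | loc : ℕ → Atom
deriving DecidableEq

/-- Qualifiers, effects and observations: finite sets of atoms. -/
abbrev Qual : Type := Finset Atom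

/-- Types of the direct-style λ*ε-calculus. `fn x p T ε r U` is `(x : T^p) →^ε U^r`. -/
inductive Ty : Type
  | base : ℕ → Ty
  | fn : ℕ → Qual → Ty → Qual → Qual → Ty → Ty
  | ref : ℕ → Ty

/-- Entries of typing contexts / store typings. -/
abbrev Binding := ℕ × Ty × Qual
abbrev Ctx := List Binding
abbrev StoreTy := List Binding

/-- Lookup in an association list (most recent binding first). -/
def lookupL {α : Type} : List (ℕ × α) → ℕ → Option α
  | [], _ => none
  | (y, e) :: Γ, x => if x = y then some e else lookupL Γ x

def ctxAtoms (Γ : Ctx) : Qual := (Γ.map (fun b => Atom.var b.1)).toFinset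
def styAtoms (St : StoreTy) : Qual := (St.map (fun b => Atom.loc b.1)).toFinset

/-- Qualifier substitution `q[p/x]`. -/
def qsubst (q : Qual) (p : Qual) (x : ℕ) : Qual :=
  if Atom.var x ∈ q then (q.erase (Atom.var x)) ∪ p else q

/-- Term variables occurring in a qualifier. -/
def qVars (q : Qual) : Finset ℕ :=
  q.biUnion (fun a => match a with | Atom.var x => {x} | Atom.loc _ => ∅)

/-- Free term variables of a type. -/
def Ty.fv : Ty → Finset ℕ
  | .base _ => ∅
  | .ref _ => ∅
  | .fn x p T ε r U => qVars p ∪ T.fv ∪ ((qVars ε ∪ qVars r ∪ U.fv).erase x)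

/-- Qualifier substitution, extended homomorphically to types. -/
def Ty.qsubstT : Ty → Qual → ℕ → Ty
  | .base b, _, _ => .base b
  | .ref b, _, _ => .ref b
  | .fn y p T ε r U, q, x =>
      if y = x then .fn y (qsubst p q x) (T.qsubstT q x) ε r U
      else .fn y (qsubst p q x) (T.qsubstT q x) (qsubst ε q x) (qsubst r q x) (U.qsubstT q x)

/-- One-step reachability between atoms, as determined by Γ and Σ. -/
def Reaches (Γ : Ctx) (St : StoreTy) (a b : Atom) : Prop :=
  match a with
  | .var x => ∃ e : Ty × Qual, lookupL Γ x = some e ∧ b ∈ e.2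
  | .loc l => ∃ e : Ty × Qual, lookupL St l = some e ∧ b ∈ e.2

/-- `Sat Γ St q s` : `s` is the saturation (transitive reachability closure) `q*` of `q`. -/
def Sat (Γ : Ctx) (St : StoreTy) (q s : Qual) : Prop :=
  ∀ a, a ∈ s ↔ ∃ b ∈ q, Relation.ReflTransGen (Reaches Γ St) b a

/-- Qualifier subtyping (rule q-sub). -/
def SubQual (Γ : Ctx) (St : StoreTy) (p q : Qual) : Prop :=
  p ⊆ q ∧ q ⊆ ctxAtoms Γ ∪ styAtoms St

/-- Subtyping on ordinary types (rules s-base, s-ref, s-fun). -/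
inductive SubTy : Ctx → StoreTy → Ty → Ty → Prop
  | base {Γ St b} : SubTy Γ St (.base b) (.base b)
  | ref {Γ St b} : SubTy Γ St (.ref b) (.ref b)
  | fn {Γ St x o p q r ε₁ ε₂} {S U T V : Ty} :
      SubTy Γ St U S → SubQual Γ St p o →
      SubTy ((x, U, p) :: Γ) St T V →
      SubQual ((x, U, p) :: Γ) St q r →
      SubQual ((x, U, p) :: Γ) St ε₁ ε₂ →
      SubTy Γ St (.fn x o S ε₁ q T) (.fn x p U ε₂ r V)

/-- Subtyping on qualified types with effects (rule sqe-sub). -/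
def SubQTy (Γ : Ctx) (St : StoreTy) (S : Ty) (p ε₁ : Qual) (T : Ty) (q ε₂ : Qual) : Prop :=
  SubTy Γ St S T ∧ SubQual Γ St p q ∧ SubQual Γ St ε₁ ε₂

/-- Terms of the direct-style λ*ε-calculus. `cst b c` is the constant `c` of base type `b`;
`ref t₁ t₂` is `ref_{t₁} t₂`. -/
inductive Tm : Type
  | cst : ℕ → ℕ → Tm
  | fvar : ℕ → Tm
  | loc : ℕ → Tm
  | abs : ℕ → Tm → Tm
  | app : Tm → Tm → Tm
  | ref : Tm → Tm → Tm
  | deref : Tm → Tm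
  | assign : Tm → Tm → Tm
  | lett : ℕ → Tm → Tm → Tm

/-- The base type `Alloc` of allocation capabilities. -/
def allocB : ℕ := 0
/-- The base type `Unit`. -/
def unitB : ℕ := 1

/-- Term typing `Γ^φ | Σ ⊢ t : T^q ε` of the direct-style λ*ε-calculus. -/
inductive HasTy : Qual → Ctx → StoreTy → Tm → Ty → Qual → Qual → Prop
  | cst {φ Γ St b c} : HasTy φ Γ St (.cst b c) (.base b) ∅ ∅
  | var {φ Γ St x T q} :
      lookupL Γ x = some (T, q) → Atom.var x ∈ φ →
      HasTy φ Γ St (.fvar x) T {Atom.var x} ∅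
  | loc {φ Γ St l T q} :
      lookupL St l = some (T, q) → Atom.loc l ∈ φ →
      HasTy φ Γ St (.loc l) T {Atom.loc l} ∅
  | abs {φ Γ St x t T U p q r ε} :
      HasTy (insert (Atom.var x) q) ((x, T, p) :: Γ) St t U r ε →
      q ⊆ φ →
      HasTy φ Γ St (.abs x t) (.fn x p T ε r U) q ∅
  | app {φ Γ St t₁ t₂ x T U p q r ps qs ε₁ ε₂ ε₃} :
      HasTy φ Γ St t₁ (.fn x (ps ∩ qs) T ε₃ r U) q ε₁ →
      HasTy φ Γ St t₂ T p ε₂ →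
      Sat Γ St p ps → Sat Γ St q qs →
      x ∉ U.fv → ε₃ ⊆ insert (Atom.var x) q → r ⊆ insert (Atom.var x) φ →
      HasTy φ Γ St (.app t₁ t₂) U (qsubst r p x) (qsubst (ε₁ ∪ ε₂ ∪ ε₃) p x)
  | lett {φ Γ St x t₁ t₂ S T p q ps φs ε₁ ε₂} :
      HasTy φ Γ St t₁ S p ε₁ →
      Sat Γ St p ps → Sat Γ St φ φs →
      HasTy (insert (Atom.var x) φ) ((x, S, ps ∩ φs) :: Γ) St t₂ T q ε₂ →
      x ∉ T.fv →
      HasTy φ Γ St (.lett x t₁ t₂) T (qsubst q p x) (qsubst (ε₁ ∪ ε₂) p x)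
  | ref {φ Γ St t₁ t₂ b q ε₁ ε₂} :
      HasTy φ Γ St t₁ (.base allocB) q ε₁ →
      HasTy φ Γ St t₂ (.base b) ∅ ε₂ →
      HasTy φ Γ St (.ref t₁ t₂) (.ref b) ∅ (ε₁ ∪ ε₂ ∪ q)
  | deref {φ Γ St t b q ε} :
      HasTy φ Γ St t (.ref b) q ε →
      HasTy φ Γ St (.deref t) (.base b) ∅ (ε ∪ q)
  | assign {φ Γ St t₁ t₂ b q ε₁ ε₂} :
      HasTy φ Γ St t₁ (.ref b) q ε₁ →
      HasTy φ Γ St t₂ (.base b) ∅ ε₂ →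
      HasTy φ Γ St (.assign t₁ t₂) (.base unitB) ∅ (ε₁ ∪ ε₂ ∪ q)
  | sub {φ Γ St t S T p q ε₁ ε₂} :
      HasTy φ Γ St t S p ε₁ → SubQTy Γ St S p ε₁ T q ε₂ →
      q ⊆ φ → ε₂ ⊆ φ →
      HasTy φ Γ St t T q ε₂

/-- **Top-Level Substitutions Distribute with Overlap**: suppose `x : T^q ∈ Γ`,
`θ = [p/x]`, `p` and `q` consist only of store locations in `dom(Σ)`, `p ∩ φ ⊆ q`,
`r ⊆ φ`, `r' ⊆ φ`, and `r` and `r'` are saturated with respect to `Γ` and `Σ`.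
Then qualifier substitution distributes over intersection: `(r ∩ r')θ = rθ ∩ r'θ`. -/
theorem top_level_subst_distributes_with_overlap
    (Γ : Ctx) (St : StoreTy) (x : ℕ) (T : Ty) (p q r r' φ : Qual)
    (hx : lookupL Γ x = some (T, q))
    (hp : p ⊆ styAtoms St) (hq : q ⊆ styAtoms St)
    (hpφ : p ∩ φ ⊆ q)
    (hr : r ⊆ φ) (hr' : r' ⊆ φ)
    (hrsat : Sat Γ St r r) (hr'sat : Sat Γ St r' r') :
    qsubst (r ∩ r') p x = qsubst r p x ∩ qsubst r' p x := by
  have key : ∀ (s : Qual), Sat Γ St s s → Atom.var x ∈ s → ∀ a ∈ p, a ∈ φ → a ∈ s := by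
    intro s hs hxs a hap haφ
    have haq : a ∈ q := hpφ (Finset.mem_inter.mpr ⟨hap, haφ⟩)
    exact (hs a).mpr ⟨Atom.var x, hxs, Relation.ReflTransGen.single ⟨(T, q), hx, haq⟩⟩
  unfold qsubst
  by_cases h1 : Atom.var x ∈ r <;> by_cases h2 : Atom.var x ∈ r'
  · simp only [Finset.mem_inter.mpr ⟨h1, h2⟩, h1, h2, if_true]
    ext a
    simp only [Finset.mem_union, Finset.mem_erase, Finset.mem_inter]
    tauto
  · have : Atom.var x ∉ r ∩ r' := by simp [Finset.mem_inter, h2]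
    simp only [this, h1, h2, if_true, if_false]
    ext a
    simp only [Finset.mem_union, Finset.mem_erase, Finset.mem_inter]
    constructor
    · rintro ⟨har, har'⟩
      exact ⟨Or.inl ⟨fun hax => h2 (hax ▸ har'), har⟩, har'⟩
    · rintro ⟨(⟨_, har⟩ | hap), har'⟩
      · exact ⟨har, har'⟩
      · exact ⟨key r hrsat h1 a hap (hr' har'), har'⟩
  · have : Atom.var x ∉ r ∩ r' := by simp [Finset.mem_inter, h1]
    simp only [this, h1, h2, if_true, if_false]
    ext a
    simp only [Finset.mem_union, Finset.mem_erase, Finset.mem_inter]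
    constructor
    · rintro ⟨har, har'⟩
      exact ⟨har, Or.inl ⟨fun hax => h1 (hax ▸ har), har'⟩⟩
    · rintro ⟨har, (⟨_, har'⟩ | hap)⟩
      · exact ⟨har, har'⟩
      · exact ⟨har, key r' hr'sat h2 a hap (hr har)⟩
  · have : Atom.var x ∉ r ∩ r' := by simp [Finset.mem_inter, h1]
    simp only [this, h1, h2, if_false]
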